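/- arXiv:1905.09223 — 6 statements merged into one kernel-verified Lean document; each statement's English description precedes it below -/
import Mathlib

section
/- Let α be a real number with α − max G ∉ {0, −1, −2, …} and assume Ω_G(n) ≠ 0 for every integer n ≥ 0. Then, with no assumptions on the real numbers κ_i^g (i = 0,…,m−1, g ∈ G), one has ⟨q_n, x^i⟩ = 0 for every n ≥ m and every 0 ≤ i ≤ n−1, where ⟨·,·⟩ is the bilinear form defined below. -/
open Polynomial Finset

/-- Pochhammer symbol `(a)_l = a (a+1) ⋯ (a+l-1)`, with `(a)_0 = 1`. -/
noncomputable def poch (a : ℝ) (l : ℕ) : ℝ := ∏ t ∈ Finset.range l, (a + t)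

/-- Generalized binomial coefficient `binom (n+α, n−j) = (α+j+1)⋯(α+n)/(n−j)!`. -/
noncomputable def genBinom (α : ℝ) (n j : ℕ) : ℝ :=
  (∏ t ∈ Finset.Ico (j + 1) (n + 1), (α + t)) / (Nat.factorial (n - j) : ℝ)

/-- Laguerre polynomial `L_n^α(x) = Σ_{j=0}^n ((−x)^j/j!)·binom(n+α, n−j)`. -/
noncomputable def laguerre (α : ℝ) (n : ℕ) : Polynomial ℝ :=
  ∑ j ∈ Finset.range (n + 1),
    Polynomial.C ((-1 : ℝ) ^ j / (Nat.factorial j : ℝ) * genBinom α n j) * Polynomial.X ^ j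

/-- Laguerre polynomials indexed by `ℤ`, with the convention `L_u^α = 0` for `u < 0`. -/
noncomputable def laguerreZ (α : ℝ) (n : ℤ) : Polynomial ℝ :=
  if n < 0 then 0 else laguerre α n.toNat

/-- The polynomial `binom (x+l, l) = (x+1)(x+2)⋯(x+l)/l!`. -/
noncomputable def binomPoly (l : ℕ) : Polynomial ℝ :=
  Polynomial.C ((Nat.factorial l : ℝ)⁻¹) *
    ∏ t ∈ Finset.range l, (Polynomial.X + Polynomial.C ((t : ℝ) + 1))

/-- The Casoratian `Ω_G(x) = det (R_{g_l}(x−j))_{l,j=1,…,m}`. -/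
noncomputable def casoratian {m : ℕ} (R : Fin m → Polynomial ℝ) (x : ℝ) : ℝ :=
  Matrix.det (Matrix.of fun l j : Fin m => (R l).eval (x - ((j : ℕ) + 1)))

/-- The maximum of the finite set `G` (given by the values of `g`). -/
noncomputable def Gmax {m : ℕ} (g : Fin m → ℕ) : ℕ := Finset.univ.sup g

/-- The polynomial `q_n`, defined as an `(m+1)×(m+1)` determinant whose first row is
`(L_n^α(x), …, L_{n−m}^α(x))` and whose `(h+1)`-th row is `(R_{g_h}(n), …, R_{g_h}(n−m))`. -/
noncomputable def qpoly (α : ℝ) {m : ℕ} (R : Fin m → Polynomial ℝ) (n : ℤ) : Polynomial ℝ :=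
  Matrix.det (Matrix.of fun i j : Fin (m + 1) =>
    if h : (i : ℕ) = 0 then laguerreZ α (n - (j : ℕ))
    else Polynomial.C ((R ⟨(i : ℕ) - 1, by have := i.isLt; omega⟩).eval ((n : ℝ) - ((j : ℕ) : ℝ))))

/-- `q_n` extended by the convention `q_k = 0` for `k < 0`. -/
noncomputable def qZ (α : ℝ) {m : ℕ} (R : Fin m → Polynomial ℝ) (n : ℤ) : Polynomial ℝ :=
  if n < 0 then 0 else qpoly α R n

/-- `momFun β p k = L_β(p(x)·x^k)`, where `L_β` is the moment functional on Laurent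
polynomials determined by `L_β(x^j) = Γ(β+j+1)`. -/
noncomputable def momFun (β : ℝ) (p : Polynomial ℝ) (k : ℤ) : ℝ :=
  ∑ t ∈ Finset.range (p.natDegree + 1), p.coeff t * Real.Gamma (β + t + k + 1)

/-- The bilinear form `⟨p, q⟩ = L_{α−m}(p·q) + Σ_{i=0}^{m−1} (q^{(i)}(0)/i!)·L_α(p·U_i)`,
where `U_i(x) = Σ_{g∈G} ( −x^{i−m}/m + κ_i^g·Σ_{l=0}^g (α−l)_l w_l^g x^{−l−1} )`. -/
noncomputable def bilin (α : ℝ) {m : ℕ} (g : Fin m → ℕ) (κ : ℕ → Fin m → ℝ)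
    (w : Fin m → ℕ → ℝ) (p q : Polynomial ℝ) : ℝ :=
  momFun (α - m) (p * q) 0 +
    ∑ i ∈ Finset.range m,
      (Polynomial.eval 0 (Polynomial.derivative^[i] q) / (Nat.factorial i : ℝ)) *
        (∑ h : Fin m,
          (-(1 / (m : ℝ)) * momFun α p ((i : ℤ) - (m : ℤ)) +
            κ i h * ∑ l ∈ Finset.range (g h + 1),
              poch (α - l) l * w h l * momFun α p (-((l : ℤ) + 1))))

/-- The bilinear form `⟨p, q⟩_ξ` (case `α` a positive integer with `α ≤ max G`). -/
noncomputable def bilinXi (α : ℕ) {m : ℕ} (g : Fin m → ℕ) (κ : ℕ → Fin m → ℝ)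
    (w : Fin m → ℕ → ℝ) (p q : Polynomial ℝ) : ℝ :=
  momFun ((α - m : ℕ) : ℝ) (p * Polynomial.derivative^[m - α] q) 0 +
    ∑ i ∈ Finset.range m,
      (Polynomial.eval 0 (Polynomial.derivative^[i] q) / (Nat.factorial i : ℝ)) *
        (∑ h : Fin m,
          (poch ((i : ℝ) - m + α + 1) (m - α) * (-(1 / (m : ℝ))) * momFun α p ((i : ℤ) - (m : ℤ)) +
            κ i h * ∑ l ∈ Finset.range (if g h < α then g h + 1 else α),
              poch ((α : ℝ) - l) l * w h l * momFun α p (-((l : ℤ) + 1)))) +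
    Real.Gamma α *
      ∑ i ∈ Finset.range m,
        (Polynomial.eval 0 (Polynomial.derivative^[i] q) / (Nat.factorial i : ℝ)) *
          ∑ h ∈ Finset.univ.filter (fun h : Fin m => α ≤ g h),
            κ i h *
              ∑ j ∈ Finset.range (g h - α + 1),
                (Polynomial.eval 0 (Polynomial.derivative^[j] p) / (Nat.factorial j : ℝ)) *
                  ∑ l ∈ Finset.Icc (α + j) (g h), poch ((α : ℝ) - l) j * w h l

/-!
Expanding the determinant along its first row gives `q_n = ∑ⱼ (-1)ʲ Mⱼ(n) L_{n-j}^α`, where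
`Mⱼ(n)` are the maximal minors of the rows `R_g(n), …, R_g(n-m)`. Two moment computations for
Laguerre polynomials, both instances of the Chu–Vandermonde identity, then do all the work:
`L_α(L_r^α x^k) = 0` for `0 ≤ k < r`, and `(α-l)_l L_α(L_r^α x^{-l-1}) = Γ(α) binom(r+l, l)`.
Summed against `w_l^g`, the second turns the `κ_i^g`-terms of `⟨q_n, x^i⟩` into `Γ(α)` times a
determinant in which the row of `R_g` appears twice, so they vanish. What is left is
`L_α(q_n x^{i-m})`, cancelled by the `-x^{i-m}/m` terms when `i < m` and an orthogonality
moment of `q_n` when `m ≤ i < n`.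
-/

lemma poch_eq_eval_ascPochhammer (a : ℝ) (l : ℕ) : poch a l = (ascPochhammer ℝ l).eval a := by
  induction l with
  | zero => simp [poch]
  | succ l ih => rw [poch, prod_range_succ, ← poch, ih, ascPochhammer_succ_eval]

lemma poch_succ (a : ℝ) (l : ℕ) : poch a (l + 1) = poch a l * (a + l) := prod_range_succ _ _

lemma poch_neg_sub_add_one (b : ℝ) (j : ℕ) : poch (-b - j + 1) j = (-1) ^ j * poch b j := by
  rw [poch_eq_eval_ascPochhammer, poch_eq_eval_ascPochhammer,
    show -b - j + 1 = -(b + j - 1) by ring, ascPochhammer_eval_neg_eq_descPochhammer,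
    descPochhammer_eval_eq_ascPochhammer]
  congr 2; ring

lemma poch_eq_descPochhammer_smeval (x : ℝ) (k : ℕ) :
    poch (x - k + 1) k = (descPochhammer ℤ k).smeval x := by
  rw [descPochhammer_smeval_eq_ascPochhammer, ascPochhammer_smeval_eq_eval,
    poch_eq_eval_ascPochhammer]

-- `poch (x - k + 1) k = x (x - 1) ⋯ (x - k + 1)` is the falling factorial, for which Mathlib
-- has Chu–Vandermonde.
lemma poch_vandermonde (x y : ℝ) (k : ℕ) :
    poch (x + y - k + 1) k = ∑ j ∈ range (k + 1),
      (k.choose j : ℝ) * (poch (x - j + 1) j * poch (y - (k - j : ℕ) + 1) (k - j)) := by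
  rw [poch_eq_descPochhammer_smeval, Ring.descPochhammer_smeval_add _ (Commute.all x y),
    Nat.sum_antidiagonal_eq_sum_range_succ (fun i j => (k.choose i : ℝ) *
      ((descPochhammer ℤ i).smeval x * (descPochhammer ℤ j).smeval y))]
  simp only [poch_eq_descPochhammer_smeval]

lemma sum_choose_mul_poch (r : ℕ) (a b : ℝ) :
    ∑ j ∈ range (r + 1), (-1 : ℝ) ^ j * (r.choose j : ℝ) * poch b j * poch (a + j + 1) (r - j)
      = poch (a + 1 - b) r := by
  rw [show a + 1 - b = -b + (a + r) - r + 1 by ring, poch_vandermonde]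
  refine sum_congr rfl fun j hj => ?_
  have hjr : j ≤ r := Nat.lt_succ_iff.mp (mem_range.mp hj)
  rw [poch_neg_sub_add_one, show a + r - ((r - j : ℕ) : ℝ) + 1 = a + j + 1 by
    push_cast [Nat.cast_sub hjr]; ring]
  ring

lemma Gamma_add_nat_eq_mul_poch (x : ℝ) (j : ℕ) (hx : ∀ t : ℕ, t < j → x + t ≠ 0) :
    Real.Gamma (x + j) = Real.Gamma x * poch x j := by
  induction j with
  | zero => simp [poch]
  | succ j ih =>
    rw [Nat.cast_succ, ← add_assoc, Real.Gamma_add_one (hx j j.lt_succ_self),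
      ih fun t ht => hx t (ht.trans j.lt_succ_self), poch_succ]
    ring

lemma binomPoly_eval_natCast (l r : ℕ) :
    (binomPoly l).eval (r : ℝ) = poch ((l : ℝ) + 1) r / r.factorial := by
  have hl := factorial_mul_ascPochhammer ℝ l r
  have hr := factorial_mul_ascPochhammer ℝ r l
  rw [← poch_eq_eval_ascPochhammer] at hl
  rw [← poch_eq_eval_ascPochhammer, add_comm r l] at hr
  rw [binomPoly, eval_mul, eval_C, eval_prod]
  simp only [eval_add, eval_X, eval_C]
  rw [show ∏ t ∈ range l, ((r : ℝ) + (t + 1)) = poch (r + 1) l from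
    prod_congr rfl fun t _ => by ring]
  field_simp
  linear_combination hr - hl

lemma momFun_eq_sum_range (β : ℝ) {p : ℝ[X]} (k : ℤ) {N : ℕ} (hN : p.natDegree < N) :
    momFun β p k = ∑ t ∈ range N, p.coeff t * Real.Gamma (β + t + k + 1) :=
  sum_subset (fun t ht => mem_range.mpr ((mem_range.mp ht).trans_le hN))
    fun t _ ht => by rw [coeff_eq_zero_of_natDegree_lt (by simpa using ht), zero_mul]

lemma momFun_eq_lsum (β : ℝ) (p : ℝ[X]) (k : ℤ) :
    momFun β p k = lsum (fun t => LinearMap.mulRight ℝ (Real.Gamma (β + t + k + 1))) p := by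
  rw [lsum_apply, sum_over_range _ fun t => zero_mul _]
  rfl

lemma momFun_sum_C_mul {ι : Type*} (β : ℝ) (s : Finset ι) (c : ι → ℝ) (p : ι → ℝ[X]) (k : ℤ) :
    momFun β (∑ j ∈ s, C (c j) * p j) k = ∑ j ∈ s, c j * momFun β (p j) k := by
  simp only [momFun_eq_lsum, ← smul_eq_C_mul, map_sum, map_smul, smul_eq_mul]

lemma momFun_mul_X_pow (α : ℝ) (m : ℕ) (p : ℝ[X]) (i : ℕ) :
    momFun (α - m) (p * X ^ i) 0 = momFun α p ((i : ℤ) - m) := by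
  have hdeg : (p * X ^ i).natDegree < i + (p.natDegree + 1) := by
    have := natDegree_mul_le (p := p) (q := X ^ i)
    have := natDegree_X_pow_le (R := ℝ) i
    omega
  rw [momFun_eq_sum_range _ _ hdeg, sum_range_add, momFun,
    sum_eq_zero fun t ht => by rw [coeff_mul_X_pow', if_neg (by simpa using ht), zero_mul],
    zero_add]
  refine sum_congr rfl fun t _ => ?_
  rw [add_comm i t, coeff_mul_X_pow]
  push_cast; ring_nf

lemma laguerre_natDegree_lt (α : ℝ) (n : ℕ) : (laguerre α n).natDegree < n + 1 :=
  Nat.lt_succ_of_le <| natDegree_sum_le_of_forall_le _ _ fun j hj =>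
    (natDegree_C_mul_X_pow_le _ j).trans (Nat.lt_succ_iff.mp (mem_range.mp hj))

lemma laguerre_coeff (α : ℝ) {n t : ℕ} (ht : t ≤ n) :
    (laguerre α n).coeff t =
      (-1) ^ t / t.factorial * (poch (α + t + 1) (n - t) / (n - t).factorial) := by
  rw [laguerre, finsetSum_coeff,
    sum_eq_single t (fun j _ hj => by rw [coeff_C_mul_X_pow, if_neg (Ne.symm hj)])
      (fun h => absurd (mem_range.mpr (Nat.lt_succ_of_le ht)) h),
    coeff_C_mul_X_pow, if_pos rfl, genBinom, prod_Ico_eq_prod_range, poch]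
  congr 4
  · omega
  · ext s; push_cast; ring

lemma momFun_laguerre_of_Gamma_eq (α b c : ℝ) (r : ℕ) (k : ℤ)
    (hΓ : ∀ j ≤ r, Real.Gamma (α + j + k + 1) = c * poch b j) :
    momFun α (laguerre α r) k = c * poch (α + 1 - b) r / r.factorial := by
  rw [momFun_eq_sum_range α k (laguerre_natDegree_lt α r), ← sum_choose_mul_poch, mul_sum, sum_div]
  refine sum_congr rfl fun j hj => ?_
  have hjr : j ≤ r := Nat.lt_succ_iff.mp (mem_range.mp hj)
  rw [laguerre_coeff α hjr, hΓ j hjr, Nat.cast_choose ℝ hjr]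
  field_simp

lemma momFun_laguerre_natCast_eq_zero (α : ℝ) {r k : ℕ} (hk : k < r)
    (hα : ∀ t : ℕ, α + 1 + t ≠ 0) :
    momFun α (laguerre α r) k = 0 := by
  have hΓ : ∀ j ≤ r, Real.Gamma (α + j + k + 1) = Real.Gamma (α + k + 1) * poch (α + k + 1) j :=
    fun j _ => by
      rw [← Gamma_add_nat_eq_mul_poch _ _ fun t _ h => hα (k + t) (by push_cast; linarith)]
      ring_nf
  rw [momFun_laguerre_of_Gamma_eq α _ _ r k hΓ, show α + 1 - (α + k + 1) = -k by ring,
    poch, prod_eq_zero (mem_range.mpr hk) (neg_add_cancel _), mul_zero, zero_div]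

lemma poch_mul_momFun_laguerre_inv_X_pow (α : ℝ) (r l : ℕ) (hα : ∀ t : ℕ, α - l + t ≠ 0) :
    poch (α - l) l * momFun α (laguerre α r) (-((l : ℤ) + 1)) =
      Real.Gamma α * (binomPoly l).eval (r : ℝ) := by
  have hΓ : ∀ j ≤ r, Real.Gamma (α + j + (-((l : ℤ) + 1) : ℤ) + 1) =
      Real.Gamma (α - l) * poch (α - l) j := fun j _ => by
    rw [← Gamma_add_nat_eq_mul_poch _ _ fun t _ => hα t]
    push_cast; ring_nf
  have hΓα := Gamma_add_nat_eq_mul_poch (α - l) l fun t _ => hα t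
  rw [sub_add_cancel] at hΓα
  rw [momFun_laguerre_of_Gamma_eq α _ _ r _ hΓ, binomPoly_eval_natCast, hΓα,
    show α + 1 - (α - l) = l + 1 by ring]
  ring

noncomputable def qMinor {m : ℕ} (R : Fin m → ℝ[X]) (n : ℕ) (j : Fin (m + 1)) : ℝ :=
  (Matrix.of fun a b : Fin m => (R a).eval ((n : ℝ) - (j.succAbove b : ℕ))).det

lemma qpoly_eq_sum_laguerre (α : ℝ) {m : ℕ} (R : Fin m → ℝ[X]) {n : ℕ} (hn : m ≤ n) :
    qpoly α R n = ∑ j : Fin (m + 1), C ((-1) ^ (j : ℕ) * qMinor R n j) * laguerre α (n - j) := by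
  rw [qpoly, Matrix.det_succ_row_zero]
  refine sum_congr rfl fun j _ => ?_
  have hminor : ((Matrix.of fun i j : Fin (m + 1) =>
      if h : (i : ℕ) = 0 then laguerreZ α (n - (j : ℕ))
      else C ((R ⟨(i : ℕ) - 1, by omega⟩).eval (((n : ℤ) : ℝ) - ((j : ℕ) : ℝ)))).submatrix
        Fin.succ j.succAbove).det = C (qMinor R n j) := by
    rw [qMinor, RingHom.map_det]
    congr 1
  have hj : (j : ℕ) ≤ n := by omega
  simp only [Matrix.of_apply, Fin.val_zero, ↓reduceDIte]
  rw [hminor, laguerreZ, if_neg (by omega),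
    show ((n : ℤ) - (j : ℕ)).toNat = n - j by omega]
  simp only [map_mul, map_pow, map_neg, map_one]
  ring

lemma sum_eval_mul_qMinor {m : ℕ} (R : Fin m → ℝ[X]) (n : ℕ) (h : Fin m) :
    ∑ j : Fin (m + 1), (-1) ^ (j : ℕ) * (R h).eval ((n : ℝ) - (j : ℕ)) * qMinor R n j = 0 := by
  let V : Matrix (Fin m) (Fin (m + 1)) ℝ := Matrix.of fun a b => (R a).eval ((n : ℝ) - (b : ℕ))
  have hrep : (Matrix.of (Matrix.vecCons (V h) V)).det = 0 :=
    Matrix.det_zero_of_row_eq (Fin.succ_ne_zero h).symm rfl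
  rw [Matrix.det_succ_row_zero] at hrep
  rw [← hrep]
  rfl

lemma sum_poch_mul_momFun_qpoly_eq_zero (α : ℝ) {m : ℕ} (R : Fin m → ℝ[X]) {n : ℕ} (hn : m ≤ n)
    (h : Fin m) (w : ℕ → ℝ) (d : ℕ) (hw : R h = ∑ l ∈ range (d + 1), C (w l) * binomPoly l)
    (hα : ∀ l ≤ d, ∀ t : ℕ, α - l + t ≠ 0) :
    ∑ l ∈ range (d + 1), poch (α - l) l * w l * momFun α (qpoly α R n) (-((l : ℤ) + 1)) = 0 := by
  have hterm : ∀ l ∈ range (d + 1),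
      poch (α - l) l * w l * momFun α (qpoly α R n) (-((l : ℤ) + 1)) =
        Real.Gamma α * ∑ j : Fin (m + 1),
          (-1) ^ (j : ℕ) * (w l * (binomPoly l).eval ((n : ℝ) - j)) * qMinor R n j := by
    intro l hl
    rw [qpoly_eq_sum_laguerre α R hn, momFun_sum_C_mul, mul_sum, mul_sum]
    refine sum_congr rfl fun j _ => ?_
    have hL := poch_mul_momFun_laguerre_inv_X_pow α (n - j) l
      (hα l (Nat.lt_succ_iff.mp (mem_range.mp hl)))
    rw [Nat.cast_sub (by omega)] at hL
    linear_combination (w l * (-1) ^ (j : ℕ) * qMinor R n j) * hL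
  rw [sum_congr rfl hterm, ← mul_sum, sum_comm]
  convert mul_zero (Real.Gamma α) using 2
  rw [← sum_eval_mul_qMinor R n h, hw]
  simp only [eval_finsetSum, eval_mul, eval_C, mul_sum, sum_mul]

lemma eval_zero_iterate_derivative_X_pow_div_factorial (k i : ℕ) :
    (derivative^[k] (X ^ i : ℝ[X])).eval 0 / k.factorial = if k = i then 1 else 0 := by
  rw [← coeff_zero_eq_eval_zero, coeff_iterate_derivative, coeff_X_pow, zero_add,
    Nat.descFactorial_self]
  split_ifs with hk <;> simp [hk, Nat.factorial_ne_zero]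

lemma bilin_X_pow_of_forall_sum_eq_zero (α : ℝ) {m : ℕ} (g : Fin m → ℕ) (κ : ℕ → Fin m → ℝ)
    (w : Fin m → ℕ → ℝ) (p : ℝ[X])
    (hp : ∀ h : Fin m,
      ∑ l ∈ range (g h + 1), poch (α - l) l * w h l * momFun α p (-((l : ℤ) + 1)) = 0)
    (i : ℕ) :
    bilin α g κ w p (X ^ i) = if i < m then 0 else momFun α p ((i : ℤ) - m) := by
  simp only [bilin, momFun_mul_X_pow, eval_zero_iterate_derivative_X_pow_div_factorial, hp,
    mul_zero, add_zero, ite_mul, one_mul, zero_mul, sum_ite_eq', mem_range, sum_const, card_univ,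
    Fintype.card_fin, nsmul_eq_mul]
  split_ifs with him
  · have hm : (m : ℝ) ≠ 0 := Nat.cast_ne_zero.mpr (by omega)
    field_simp
    ring
  · ring

lemma momFun_qpoly_natCast_eq_zero (α : ℝ) {m : ℕ} (R : Fin m → ℝ[X]) {n k : ℕ} (hn : m ≤ n)
    (hk : k + m < n) (hα : ∀ t : ℕ, α + 1 + t ≠ 0) :
    momFun α (qpoly α R n) k = 0 := by
  rw [qpoly_eq_sum_laguerre α R hn, momFun_sum_C_mul]
  exact sum_eq_zero fun j _ => by rw [momFun_laguerre_natCast_eq_zero α (by omega) hα, mul_zero]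

theorem statement6_general (α : ℝ) (m : ℕ) (g : Fin m → ℕ) (R : Fin m → Polynomial ℝ)
    (hα : ∀ k : ℕ, α - (Gmax g : ℝ) ≠ -(k : ℝ))
    (w : Fin m → ℕ → ℝ)
    (hw : ∀ h : Fin m, R h = ∑ l ∈ Finset.range (g h + 1), Polynomial.C (w h l) * binomPoly l)
    (κ : ℕ → Fin m → ℝ) :
    ∀ n : ℕ, m ≤ n → ∀ i : ℕ, i < n →
      bilin α g κ w (qpoly α R (n : ℤ)) (Polynomial.X ^ i) = 0 := by
  intro n hn i hi
  have hα₁ : ∀ t : ℕ, α + 1 + t ≠ 0 := fun t h => hα (Gmax g + 1 + t) (by push_cast; linarith)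
  have hα₂ : ∀ h : Fin m, ∀ l ≤ g h, ∀ t : ℕ, α - l + t ≠ 0 := by
    intro h l hl t ht
    have hlG : l ≤ Gmax g := hl.trans (le_sup (mem_univ h))
    exact hα (Gmax g - l + t) (by push_cast [Nat.cast_sub hlG]; linarith)
  rw [bilin_X_pow_of_forall_sum_eq_zero α g κ w _
    fun h => sum_poch_mul_momFun_qpoly_eq_zero α R hn h (w h) (g h) (hw h) (hα₂ h)]
  split_ifs with him
  · rfl
  · rw [show (i : ℤ) - m = ((i - m : ℕ) : ℤ) by omega]
    exact momFun_qpoly_natCast_eq_zero α R hn (by omega) hα₁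

/-- with no assumptions on the numbers `κ_i^g`, one has `⟨q_n, x^i⟩ = 0`
for every `n ≥ m` and `0 ≤ i ≤ n−1`. -/
theorem statement6 (α : ℝ) (m : ℕ) (hm : 0 < m) (g : Fin m → ℕ) (hg : StrictMono g)
    (hgpos : ∀ i, 0 < g i) (R : Fin m → Polynomial ℝ)
    (hdeg : ∀ i, (R i).natDegree = g i)
    (hlead : ∀ i, (R i).leadingCoeff = 1 / (Nat.factorial (g i) : ℝ))
    (hα : ∀ k : ℕ, α - (Gmax g : ℝ) ≠ -(k : ℝ))
    (hΩ : ∀ n : ℕ, casoratian R (n : ℝ) ≠ 0)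
    (w : Fin m → ℕ → ℝ)
    (hw : ∀ h : Fin m, R h = ∑ l ∈ Finset.range (g h + 1), Polynomial.C (w h l) * binomPoly l)
    (κ : ℕ → Fin m → ℝ) :
    ∀ n : ℕ, m ≤ n → ∀ i : ℕ, i < n →
      bilin α g κ w (qpoly α R (n : ℤ)) (Polynomial.X ^ i) = 0 :=
  statement6_general α m g R hα w hw κ
end

section
/- Assume Ω_G(0) ≠ 0. Then for each i = 0,…,m−1 there exist real numbers κ_i^g (g ∈ G) such that Σ_{g∈G} κ_i^g·R_g(−j) = 0 for every j = 1,…,m−1−i, and Σ_{g∈G} κ_i^g·R_g(−m+i) ≠ 0. -/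
open Polynomial Finset

/-! Since `Ω_G(0) ≠ 0`, the rows `(R_g(−1), …, R_g(−m))` are linearly independent, so every
vector of `ℝ^m` is a combination of them; `κ_i` is the combination giving the `(m−i)`-th
unit vector, i.e. the `(m−i)`-th row of the inverse of the Casoratian matrix. -/

noncomputable def casoratianMatrix {m : ℕ} (R : Fin m → ℝ[X]) (x : ℝ) :
    Matrix (Fin m) (Fin m) ℝ :=
  Matrix.of fun l j => (R l).eval (x - ((j : ℕ) + 1))

theorem casoratian_eq_det_casoratianMatrix {m : ℕ} (R : Fin m → ℝ[X]) (x : ℝ) :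
    casoratian R x = (casoratianMatrix R x).det := rfl

theorem Matrix.exists_vecMul_eq_single_of_det_ne_zero {n K : Type*} [Fintype n] [DecidableEq n]
    [Field K] {A : Matrix n n K} (hA : A.det ≠ 0) (k : n) :
    ∃ κ : n → K, Matrix.vecMul κ A = Pi.single k 1 :=
  Matrix.vecMul_surjective_iff_isUnit.mpr ((Matrix.isUnit_iff_isUnit_det A).mpr hA.isUnit) _

theorem exists_combination_eval_eq_single_of_casoratian_ne_zero {m : ℕ} {R : Fin m → ℝ[X]}
    {x : ℝ} (hΩ : casoratian R x ≠ 0) (k : Fin m) :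
    ∃ κ : Fin m → ℝ, ∀ j : Fin m,
      ∑ h : Fin m, κ h * (R h).eval (x - ((j : ℕ) + 1)) = (Pi.single k 1 : Fin m → ℝ) j := by
  rw [casoratian_eq_det_casoratianMatrix] at hΩ
  obtain ⟨κ, hκ⟩ := Matrix.exists_vecMul_eq_single_of_det_ne_zero hΩ k
  exact ⟨κ, fun j => by rw [← hκ]; rfl⟩

theorem statement12_general (m : ℕ) (R : Fin m → Polynomial ℝ)
    (hΩ : casoratian R (0 : ℝ) ≠ 0) :
    ∀ i : ℕ, i < m → ∃ κ : Fin m → ℝ,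
      (∀ j : ℕ, 1 ≤ j → j + i + 1 ≤ m → ∑ h : Fin m, κ h * (R h).eval (-(j : ℝ)) = 0) ∧
        ∑ h : Fin m, κ h * (R h).eval (-(m : ℝ) + (i : ℝ)) ≠ 0 := by
  intro i hi
  obtain ⟨κ, hκ⟩ :=
    exists_combination_eval_eq_single_of_casoratian_ne_zero hΩ ⟨m - i - 1, by omega⟩
  refine ⟨κ, fun j hj1 hj2 => ?_, ?_⟩
  · have hpoint : -(j : ℝ) = 0 - (((j - 1 : ℕ) : ℝ) + 1) := by
      rw [Nat.cast_sub hj1]; ring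
    rw [hpoint, hκ ⟨j - 1, by omega⟩,
      Pi.single_eq_of_ne (by simp only [ne_eq, Fin.mk.injEq]; omega)]
  · have hpoint : -(m : ℝ) + i = 0 - (((m - i - 1 : ℕ) : ℝ) + 1) := by
      rw [Nat.sub_sub, Nat.cast_sub (by omega)]; push_cast; ring
    rw [hpoint, hκ ⟨m - i - 1, by omega⟩, Pi.single_eq_same]
    exact one_ne_zero

/-- Lemma 2.1: if `Ω_G(0) ≠ 0`, then for each `i = 0,…,m−1` there exist numbers
`κ_i^g` with `Σ_{g∈G} κ_i^g R_g(−j) = 0` for `j = 1,…,m−1−i` and `Σ_{g∈G} κ_i^g R_g(−m+i) ≠ 0`. -/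
theorem statement12 (m : ℕ) (hm : 0 < m) (g : Fin m → ℕ) (hg : StrictMono g)
    (hgpos : ∀ i, 0 < g i) (R : Fin m → Polynomial ℝ)
    (hdeg : ∀ i, (R i).natDegree = g i)
    (hlead : ∀ i, (R i).leadingCoeff = 1 / (Nat.factorial (g i) : ℝ))
    (hΩ : casoratian R (0 : ℝ) ≠ 0) :
    ∀ i : ℕ, i < m → ∃ κ : Fin m → ℝ,
      (∀ j : ℕ, 1 ≤ j → j + i + 1 ≤ m → ∑ h : Fin m, κ h * (R h).eval (-(j : ℝ)) = 0) ∧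
        ∑ h : Fin m, κ h * (R h).eval (-(m : ℝ) + (i : ℝ)) ≠ 0 :=
  statement12_general m R hΩ
end

section
/- Assume Ω_G(n) ≠ 0 for every integer n ≥ 0. Then for every n ≥ 0 the function q_n is a polynomial in x of degree exactly n, with leading coefficient (−1)^n·Ω_G(n)/n!. -/
open Polynomial Finset

/-!
Expanding `q_n` along its first row writes it as `Ω_G(n) · L_n^α` plus a linear combination,
with constant coefficients (the other cofactors, built from the rows `R_{g_h}(n - j)`), of
`L_{n-1}^α, …, L_{n-m}^α`, all of degree `< n`. Since `L_n^α` has degree `n` with leading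
coefficient `(-1)^n / n!`, the claim follows as soon as `Ω_G(n) ≠ 0`.
-/

section DetFirstRow

variable {K : Type*} [CommRing K] {m : ℕ}

theorem det_eq_sum_smul_of_succ_row_C (A : Matrix (Fin (m + 1)) (Fin (m + 1)) K[X])
    (B : Matrix (Fin m) (Fin (m + 1)) K) (hB : ∀ i j, A i.succ j = C (B i j)) :
    A.det = ∑ j : Fin (m + 1), ((-1) ^ (j : ℕ) * (B.submatrix id j.succAbove).det) • A 0 j := by
  rw [Matrix.det_succ_row_zero]
  refine Finset.sum_congr rfl fun j _ => ?_
  have hminor : A.submatrix Fin.succ j.succAbove = C.mapMatrix (B.submatrix id j.succAbove) := by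
    ext1 i k; simp [hB]
  rw [hminor, ← RingHom.map_det, smul_eq_C_mul, C_mul, C_pow, C_neg, C_1]
  ring

theorem degree_det_of_succ_row_C {n : ℕ} (A : Matrix (Fin (m + 1)) (Fin (m + 1)) K[X])
    (B : Matrix (Fin m) (Fin (m + 1)) K) (hB : ∀ i j, A i.succ j = C (B i j))
    (hA₀ : (A 0 0).degree ≤ n) (hA : ∀ j : Fin m, (A 0 j.succ).degree < n)
    (hc : (B.submatrix id Fin.succ).det * (A 0 0).coeff n ≠ 0) :
    A.det.degree = n ∧ A.det.coeff n = (B.submatrix id Fin.succ).det * (A 0 0).coeff n := by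
  rw [det_eq_sum_smul_of_succ_row_C A B hB, Fin.sum_univ_succ, Fin.val_zero, pow_zero, one_mul,
    Fin.succAbove_zero]
  set tail := ∑ j : Fin m,
    ((-1) ^ (j.succ : ℕ) * (B.submatrix id j.succ.succAbove).det) • A 0 j.succ
  have htail : tail.degree < n := by
    rw [← mem_degreeLT]
    exact Submodule.sum_mem _ fun j _ => Submodule.smul_mem _ _ (mem_degreeLT.mpr (hA j))
  have hhead_coeff : ((B.submatrix id Fin.succ).det • A 0 0).coeff n =
      (B.submatrix id Fin.succ).det * (A 0 0).coeff n :=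
    coeff_smul _ _ _
  have hhead : ((B.submatrix id Fin.succ).det • A 0 0).degree = n :=
    degree_eq_of_le_of_coeff_ne_zero ((degree_smul_le _ _).trans hA₀) (hhead_coeff ▸ hc)
  refine ⟨?_, ?_⟩
  · rw [degree_add_eq_left_of_degree_lt (hhead ▸ htail), hhead]
  · rw [coeff_add, coeff_eq_zero_of_degree_lt htail, add_zero, hhead_coeff]

end DetFirstRow

theorem laguerre_degree_le (α : ℝ) (n : ℕ) : (laguerre α n).degree ≤ n := by
  rw [← mem_degreeLE]
  refine Submodule.sum_mem _ fun j hj => mem_degreeLE.mpr ?_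
  exact (degree_C_mul_X_pow_le j _).trans (mod_cast Nat.lt_succ_iff.mp (mem_range.mp hj))

theorem laguerre_coeff_self (α : ℝ) (n : ℕ) :
    (laguerre α n).coeff n = (-1) ^ n / (n.factorial : ℝ) := by
  simp only [laguerre, finsetSum_coeff, coeff_C_mul, coeff_X_pow]
  rw [Finset.sum_eq_single n (fun j _ hj => by simp [Ne.symm hj]) (by simp)]
  simp [genBinom]

theorem laguerreZ_degree_lt (α : ℝ) {k : ℤ} {n : ℕ} (hk : k < n) :
    (laguerreZ α k).degree < n := by
  unfold laguerreZ
  split_ifs with hneg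
  · exact degree_zero.trans_lt (WithBot.bot_lt_coe n)
  · exact (laguerre_degree_le α _).trans_lt (mod_cast (by omega : k.toNat < n))

theorem casoratian_eq_det_submatrix {m : ℕ} (R : Fin m → ℝ[X]) (x : ℝ) :
    casoratian R x = ((Matrix.of fun (l : Fin m) (j : Fin (m + 1)) => (R l).eval (x - j)).submatrix
      id Fin.succ).det := by
  unfold casoratian
  congr 1
  ext l k
  simp

theorem statement13_general (α : ℝ) (m : ℕ) (R : Fin m → Polynomial ℝ)
    (hΩ : ∀ n : ℕ, casoratian R (n : ℝ) ≠ 0) :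
    ∀ n : ℕ, (qpoly α R (n : ℤ)).degree = (n : ℕ) ∧
      (qpoly α R (n : ℤ)).coeff n = (-1 : ℝ) ^ n * casoratian R (n : ℝ) / (Nat.factorial n : ℝ) := by
  intro n
  have hL : laguerreZ α (n : ℤ) = laguerre α n := by simp [laguerreZ]
  rw [qpoly]
  refine (degree_det_of_succ_row_C _
    (Matrix.of fun (l : Fin m) (j : Fin (m + 1)) => (R l).eval ((n : ℝ) - j))
    (fun i j => ?_) ?_ (fun j => ?_) ?_).imp id (fun h => h.trans ?_)
  · simp
  · simpa [hL] using laguerre_degree_le α n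
  · simpa using laguerreZ_degree_lt α (by omega)
  · rw [← casoratian_eq_det_submatrix]
    simp [hL, laguerre_coeff_self, hΩ n, Nat.factorial_ne_zero]
  · rw [← casoratian_eq_det_submatrix]
    simp only [Matrix.of_apply, Fin.val_zero, dite_true, CharP.cast_eq_zero, sub_zero, hL,
      laguerre_coeff_self]
    ring

/-- for every `n ≥ 0`, `q_n` is a polynomial of degree exactly `n` with leading
coefficient `(−1)^n·Ω_G(n)/n!`. -/
theorem statement13 (α : ℝ) (m : ℕ) (hm : 0 < m) (g : Fin m → ℕ) (hg : StrictMono g)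
    (hgpos : ∀ i, 0 < g i) (R : Fin m → Polynomial ℝ)
    (hdeg : ∀ i, (R i).natDegree = g i)
    (hlead : ∀ i, (R i).leadingCoeff = 1 / (Nat.factorial (g i) : ℝ))
    (hΩ : ∀ n : ℕ, casoratian R (n : ℝ) ≠ 0) :
    ∀ n : ℕ, (qpoly α R (n : ℤ)).degree = (n : ℕ) ∧
      (qpoly α R (n : ℤ)).coeff n = (-1 : ℝ) ^ n * casoratian R (n : ℝ) / (Nat.factorial n : ℝ) :=
  statement13_general α m R hΩ
end

section
/- Let p_1, …, p_s be nonzero real polynomials and let Φ(x) = det(p_i(x−j))_{i=1,…,s; j=0,…,s−1} be their Casoratian. If the degrees deg p_1, …, deg p_s are pairwise distinct, then Φ is a nonzero polynomial of degree exactly Σ_{i=1}^{s} deg p_i − s(s−1)/2. If the degrees are not pairwise distinct, then either Φ = 0 or deg Φ < Σ_{i=1}^{s} deg p_i − s(s−1)/2. -/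
/-!
Subtracting from each column of the Casoratian suitable combinations of the earlier columns
replaces `p_i(x - j)` by the iterated difference `Δʲ p_i`, where `Δq(x) = q(x - 1) - q(x)`,
without changing the determinant. If `d_i = deg p_i`, then `Δʲ p_i` has degree at most `d_i - j`,
with coefficient `(-1)ʲ d_i(d_i - 1)⋯(d_i - j + 1) · lc(p_i)` there. After multiplying column `j`
by `xʲ`, every entry of row `i` has degree at most `d_i`; so `Φ · x^(s(s-1)/2)` has degree at most
`∑ d_i`, and its coefficient there is `±∏ lc(p_i)` times the determinant of the falling factorials
of the `d_i`, a Vandermonde determinant that vanishes exactly when two of the `d_i` coincide.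
-/

open Polynomial Finset

/-- The Casoratian `Φ(x) = det(p_i(x−j))_{i=1,…,s; j=0,…,s−1}` as a polynomial. -/
noncomputable def casPoly {s : ℕ} (p : Fin s → Polynomial ℝ) : Polynomial ℝ :=
  Matrix.det (Matrix.of fun i j : Fin s =>
    (p i).comp (Polynomial.X - Polynomial.C ((j : ℕ) : ℝ)))

namespace Polynomial

variable {R : Type*}

theorem coeff_prod_sum_of_natDegree_le [CommSemiring R] {ι : Type*} (s : Finset ι)
    (f : ι → R[X]) (d : ι → ℕ) (h : ∀ i ∈ s, (f i).natDegree ≤ d i) :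
    (∏ i ∈ s, f i).coeff (∑ i ∈ s, d i) = ∏ i ∈ s, (f i).coeff (d i) := by
  induction s using Finset.cons_induction with
  | empty => simp
  | cons a s _ ih =>
    have hs : ∀ i ∈ s, (f i).natDegree ≤ d i := fun i hi => h i (mem_cons_of_mem hi)
    rw [prod_cons, sum_cons, prod_cons,
      coeff_mul_add_eq_of_natDegree_le (h a (mem_cons_self a s))
        ((natDegree_prod_le s f).trans (sum_le_sum hs)), ih hs]

variable [CommRing R]

noncomputable def shiftDiff (h : R) (q : R[X]) : R[X] := taylor h q - q

variable (h : R)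

theorem fwdDiff_iterate_taylor (q : R[X]) (n : ℕ) :
    (fwdDiff h)^[n] (fun y => taylor y q) = fun y => taylor y ((shiftDiff h)^[n] q) := by
  induction n generalizing q with
  | zero => rfl
  | succ n ih =>
    rw [Function.iterate_succ_apply, Function.iterate_succ_apply, ← ih]
    congr 1
    ext1 y
    simp [fwdDiff, shiftDiff, taylor_taylor, add_comm]

theorem shiftDiff_iterate_eq_sum (q : R[X]) (n : ℕ) :
    (shiftDiff h)^[n] q =
      ∑ k ∈ range (n + 1), ((-1 : ℤ) ^ (n - k) * n.choose k) • taylor (k • h) q := by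
  have := fwdDiff_iter_eq_sum_shift h (fun y => taylor y q) n 0
  simpa only [fwdDiff_iterate_taylor, taylor_zero, zero_add] using this

variable {h} {q : R[X]} {d : ℕ}

theorem coeff_shiftDiff_of_natDegree_le {N : ℕ} (hN : q.natDegree ≤ N) :
    (shiftDiff h q).coeff N = 0 := by
  rw [shiftDiff, coeff_sub]
  rcases hN.lt_or_eq with hlt | rfl
  · rw [coeff_eq_zero_of_natDegree_lt (by rwa [natDegree_taylor]),
      coeff_eq_zero_of_natDegree_lt hlt, sub_zero]
  · rw [coeff_taylor_natDegree, leadingCoeff, sub_self]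

theorem coeff_shiftDiff_pred (hq : q.natDegree ≤ d) :
    (shiftDiff h q).coeff (d - 1) = d * h * q.coeff d := by
  cases d with
  | zero => simp [coeff_shiftDiff_of_natDegree_le hq]
  | succ e =>
    have hlin : (hasseDeriv e q).natDegree ≤ 1 := (natDegree_hasseDeriv_le q e).trans (by omega)
    rw [Nat.add_sub_cancel, shiftDiff, coeff_sub, taylor_coeff,
      eq_X_add_C_of_natDegree_le_one hlin]
    simp only [hasseDeriv_coeff, eval_add, eval_mul, eval_C, eval_X, zero_add, Nat.choose_self,
      add_comm 1 e, Nat.choose_succ_self_right]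
    push_cast
    ring

theorem coeff_shiftDiff_iterate_eq_zero (hq : q.natDegree ≤ d) {j N : ℕ} (hN : d < N + j) :
    ((shiftDiff h)^[j] q).coeff N = 0 := by
  induction j generalizing N with
  | zero => exact coeff_eq_zero_of_natDegree_lt (hq.trans_lt (by omega))
  | succ j ih =>
    rw [Function.iterate_succ_apply']
    exact coeff_shiftDiff_of_natDegree_le
      (natDegree_le_iff_coeff_eq_zero.mpr fun M hM => ih (by omega))

theorem natDegree_shiftDiff_iterate_le (hq : q.natDegree ≤ d) (j : ℕ) :
    ((shiftDiff h)^[j] q).natDegree ≤ d - j :=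
  natDegree_le_iff_coeff_eq_zero.mpr fun _ hN => coeff_shiftDiff_iterate_eq_zero hq (by omega)

theorem coeff_shiftDiff_iterate_sub (hq : q.natDegree ≤ d) (j : ℕ) :
    ((shiftDiff h)^[j] q).coeff (d - j) = h ^ j * d.descFactorial j * q.coeff d := by
  induction j with
  | zero => simp
  | succ j ih =>
    rw [Function.iterate_succ_apply', ← Nat.sub_sub,
      coeff_shiftDiff_pred (natDegree_shiftDiff_iterate_le hq j), ih, Nat.descFactorial_succ]
    push_cast
    ring

theorem natDegree_X_pow_mul_shiftDiff_iterate_le (hq : q.natDegree ≤ d) (j : ℕ) :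
    (X ^ j * (shiftDiff h)^[j] q).natDegree ≤ d := by
  refine natDegree_le_iff_coeff_eq_zero.mpr fun N hN => ?_
  rw [coeff_X_pow_mul']
  split_ifs
  exacts [coeff_shiftDiff_iterate_eq_zero hq (by omega), rfl]

theorem coeff_X_pow_mul_shiftDiff_iterate (hq : q.natDegree ≤ d) (j : ℕ) :
    (X ^ j * (shiftDiff h)^[j] q).coeff d = h ^ j * d.descFactorial j * q.coeff d := by
  rw [coeff_X_pow_mul']
  split_ifs with hj
  · exact coeff_shiftDiff_iterate_sub hq j
  · simp [Nat.descFactorial_eq_zero_iff_lt.mpr (not_le.mp hj)]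

end Polynomial

namespace Matrix

variable {R : Type*} [CommRing R]

section RowDegrees

variable {n : Type*} [Fintype n] [DecidableEq n] {M : Matrix n n R[X]} {d : n → ℕ}

theorem natDegree_det_le_of_natDegree_le (hM : ∀ i j, (M i j).natDegree ≤ d i) :
    M.det.natDegree ≤ ∑ i, d i := by
  rw [det_apply]
  refine natDegree_sum_le_of_forall_le _ _ fun σ _ => (natDegree_smul_le _ _).trans ?_
  calc (∏ i, M (σ i) i).natDegree ≤ ∑ i, d (σ i) :=
        (natDegree_prod_le _ _).trans (sum_le_sum fun i _ => hM (σ i) i)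
    _ = ∑ i, d i := Equiv.sum_comp σ d

theorem coeff_det_of_natDegree_le (hM : ∀ i j, (M i j).natDegree ≤ d i) :
    M.det.coeff (∑ i, d i) = (of fun i j => (M i j).coeff (d i)).det := by
  simp only [det_apply, finsetSum_coeff, coeff_smul, of_apply]
  refine sum_congr rfl fun σ _ => ?_
  rw [← Equiv.sum_comp σ d, coeff_prod_sum_of_natDegree_le _ _ _ fun i _ => hM (σ i) i]

end RowDegrees

variable {s : ℕ}

theorem det_taylor_eq_det_shiftDiff_iterate (h : R) (p : Fin s → R[X]) :
    (of fun i j : Fin s => taylor ((j : ℕ) • h) (p i)).det =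
      (of fun i j : Fin s => (shiftDiff h)^[j] (p i)).det := by
  let A : Matrix (Fin s) (Fin s) R[X] :=
    of fun k j => (((-1 : ℤ) ^ ((j : ℕ) - k) * (j : ℕ).choose k : ℤ) : R[X])
  have hA : A.det = 1 := by
    rw [det_of_isUpperTriangular fun j k hkj => by
      simp [A, Nat.choose_eq_zero_of_lt (show (k : ℕ) < j from hkj)]]
    simp [A]
  have hMA : (of fun i j : Fin s => taylor ((j : ℕ) • h) (p i)) * A =
      of fun i j : Fin s => (shiftDiff h)^[j] (p i) := by
    ext1 i j
    simp only [mul_apply, of_apply, A, shiftDiff_iterate_eq_sum]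
    rw [Fin.sum_univ_eq_sum_range
      (fun k => taylor (k • h) (p i) * (((-1 : ℤ) ^ ((j : ℕ) - k) * (j : ℕ).choose k : ℤ) : R[X])),
      ← sum_subset (range_subset_range.mpr j.isLt) fun k _ hk => by
        simp [Nat.choose_eq_zero_of_lt (show (j : ℕ) < k by simpa using hk)]]
    exact sum_congr rfl fun k _ => by rw [zsmul_eq_mul, mul_comm]
  rw [← hMA, det_mul, hA, mul_one]

theorem det_descFactorial [IsDomain R] (d : Fin s → ℕ) :
    (of fun i j : Fin s => ((d i).descFactorial j : R)).det =
      (vandermonde fun i => (d i : R)).det := by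
  rw [det_eval_matrixOfPolynomials_eq_det_vandermonde _ (fun j => descPochhammer R j)
    (fun j => descPochhammer_natDegree R j) (fun j => monic_descPochhammer R j)]
  simp [descPochhammer_eval_eq_descFactorial]

end Matrix

open Matrix

variable {s : ℕ}

theorem casPoly_mul_X_pow_eq_det (p : Fin s → ℝ[X]) :
    casPoly p * X ^ s.choose 2 =
      (of fun i j : Fin s => X ^ (j : ℕ) * (shiftDiff (-1 : ℝ))^[j] (p i)).det := by
  have hsum : ∑ j : Fin s, (j : ℕ) = s.choose 2 := by
    rw [Fin.sum_univ_eq_sum_range (fun j => j) s, sum_range_id, Nat.choose_two_right]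
  have hcas : casPoly p = (of fun i j : Fin s => taylor ((j : ℕ) • (-1 : ℝ)) (p i)).det := by
    simp [casPoly, taylor_apply, sub_eq_add_neg]
  rw [hcas, det_taylor_eq_det_shiftDiff_iterate, ← hsum, ← prod_pow_eq_pow_sum, mul_comm,
    ← det_mul_row]
  rfl

theorem natDegree_casPoly_mul_X_pow_le (p : Fin s → ℝ[X]) :
    (casPoly p * X ^ s.choose 2).natDegree ≤ ∑ i, (p i).natDegree := by
  rw [casPoly_mul_X_pow_eq_det]
  exact natDegree_det_le_of_natDegree_le fun i j =>
    natDegree_X_pow_mul_shiftDiff_iterate_le le_rfl _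

theorem coeff_casPoly_mul_X_pow (p : Fin s → ℝ[X]) :
    (casPoly p * X ^ s.choose 2).coeff (∑ i, (p i).natDegree) =
      (∏ i, (p i).leadingCoeff) * (∏ j : Fin s, (-1 : ℝ) ^ (j : ℕ)) *
        (vandermonde fun i => ((p i).natDegree : ℝ)).det := by
  rw [casPoly_mul_X_pow_eq_det, coeff_det_of_natDegree_le]
  swap
  · exact fun i j => natDegree_X_pow_mul_shiftDiff_iterate_le le_rfl _
  simp only [of_apply, coeff_X_pow_mul_shiftDiff_iterate le_rfl]
  rw [← det_descFactorial, mul_assoc, ← det_mul_row, ← det_mul_column]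
  congr 1
  ext i j
  simp only [of_apply, leadingCoeff]
  ring

theorem coeff_casPoly_mul_X_pow_ne_zero_iff {p : Fin s → ℝ[X]} (hp : ∀ i, p i ≠ 0) :
    (casPoly p * X ^ s.choose 2).coeff (∑ i, (p i).natDegree) ≠ 0 ↔
      Function.Injective (fun i => (p i).natDegree) := by
  have hlc : ∏ i, (p i).leadingCoeff ≠ 0 :=
    prod_ne_zero_iff.mpr fun i _ => leadingCoeff_ne_zero.mpr (hp i)
  have hsign : ∏ j : Fin s, (-1 : ℝ) ^ (j : ℕ) ≠ 0 :=
    prod_ne_zero_iff.mpr fun _ _ => pow_ne_zero _ (neg_ne_zero.mpr one_ne_zero)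
  rw [coeff_casPoly_mul_X_pow, mul_ne_zero_iff]
  exact (and_iff_right (mul_ne_zero hlc hsign)).trans
    (det_vandermonde_ne_zero_iff.trans (Nat.cast_injective.of_comp_iff _))

/-- if the degrees of the nonzero polynomials `p_1,…,p_s` are pairwise distinct,
then their Casoratian `Φ` is nonzero of degree exactly `Σ deg p_i − s(s−1)/2`; otherwise either
`Φ = 0` or `deg Φ < Σ deg p_i − s(s−1)/2`. -/
theorem statement16 (s : ℕ) (p : Fin s → Polynomial ℝ) (hp : ∀ i, p i ≠ 0) :
    (Function.Injective (fun i => (p i).natDegree) →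
      casPoly p ≠ 0 ∧
        ((casPoly p).natDegree : ℤ) =
          (∑ i : Fin s, ((p i).natDegree : ℤ)) - (Nat.choose s 2 : ℤ)) ∧
    (¬ Function.Injective (fun i => (p i).natDegree) →
      casPoly p = 0 ∨
        ((casPoly p).natDegree : ℤ) <
          (∑ i : Fin s, ((p i).natDegree : ℤ)) - (Nat.choose s 2 : ℤ)) := by
  have hle := natDegree_casPoly_mul_X_pow_le p
  have htop := coeff_casPoly_mul_X_pow_ne_zero_iff hp
  rw [← Nat.cast_sum]
  refine ⟨fun hinj => ?_, fun hninj => or_iff_not_imp_left.mpr fun hΦ => ?_⟩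
  · have hc := htop.mpr hinj
    have hΦ : casPoly p ≠ 0 := fun h => hc (by rw [h, zero_mul, coeff_zero])
    have hdeg := natDegree_eq_of_le_of_coeff_ne_zero hle hc
    rw [natDegree_mul_X_pow _ hΦ] at hdeg
    exact ⟨hΦ, by omega⟩
  · have hc := not_ne_iff.mp (mt htop.mp hninj)
    have hlt : (casPoly p * X ^ s.choose 2).natDegree < ∑ i, (p i).natDegree :=
      hle.lt_of_ne fun h =>
        mul_ne_zero hΦ (pow_ne_zero _ X_ne_zero) (leadingCoeff_eq_zero.mp (h ▸ hc))
    rw [natDegree_mul_X_pow _ hΦ] at hlt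
    omega
end

section
/- Let α be a real number and l a positive integer with α − l > −1. Then for every integer n ≥ 0, ∫_0^∞ L_n^α(x)·x^{α−l}·e^{−x} dx = Γ(α−l+1)·binom(n+l−1, l−1), where binom(n+l−1, l−1) is the ordinary integer binomial coefficient. -/
open Polynomial Finset

/-!
Integrating term by term against `x^(α-l) e^(-x)` turns `x^j` into
`Γ(α-l+1+j) = Γ(α-l+1) (α-l+1)_j`. Since `(-1)^j (β)_j / j! = binom(-β, j)`, the remaining sum
`Σ_j binom(α+n, n-j) binom(l-1-α, j)` is a Chu–Vandermonde convolution equal to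
`binom(n+l-1, n)`.
-/

open Nat

lemma Ring.choose_eq_prod_sub_div {K : Type*} [Field K] [CharZero K] (a : K) (k : ℕ) :
    Ring.choose a k = (∏ i ∈ range k, (a - i)) / k ! := by
  rw [Ring.choose_eq_smul, ← aeval_eq_smeval, aeval_def, ← eval_map, descPochhammer_map,
    descPochhammer_eval_eq_prod_range, smul_eq_mul, div_eq_inv_mul]

lemma genBinom_eq_choose (α : ℝ) {n j : ℕ} (hj : j ≤ n) :
    genBinom α n j = Ring.choose (α + n) (n - j) := by
  rw [genBinom, Ring.choose_eq_prod_sub_div, prod_Ico_eq_prod_range,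
    ← prod_range_reflect, show n + 1 - (j + 1) = n - j by omega]
  congr 1
  refine prod_congr rfl fun i hi => ?_
  rw [mem_range] at hi
  rw [show j + 1 + (n - j - 1 - i) = n - i by omega, Nat.cast_sub (by omega)]
  ring

lemma neg_one_pow_div_factorial_mul_poch (a : ℝ) (j : ℕ) :
    (-1) ^ j / j ! * poch a j = Ring.choose (-a) j := by
  have hneg : ∏ i ∈ range j, (-a - i) = ∏ i ∈ range j, -(a + i) :=
    prod_congr rfl fun i _ => by ring
  rw [Ring.choose_eq_prod_sub_div, hneg, prod_neg, card_range, poch]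
  ring

lemma sum_genBinom_mul_poch (α β : ℝ) (n : ℕ) :
    ∑ j ∈ range (n + 1), (-1) ^ j / j ! * genBinom α n j * poch β j =
      Ring.choose (α - β + n) n := by
  calc ∑ j ∈ range (n + 1), (-1) ^ j / j ! * genBinom α n j * poch β j
      = ∑ j ∈ range (n + 1), Ring.choose (-β) j * Ring.choose (α + n) (n - j) := by
        refine sum_congr rfl fun j hj => ?_
        rw [genBinom_eq_choose α (Nat.lt_succ_iff.mp (mem_range.mp hj)),
          ← neg_one_pow_div_factorial_mul_poch]
        ring
    _ = Ring.choose (α - β + n) n := by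
        rw [← Nat.sum_antidiagonal_eq_sum_range_succ (fun a b => Ring.choose (-β) a *
          Ring.choose (α + n) b), ← Ring.add_choose_eq n (Commute.all _ _)]
        ring_nf

lemma Real.Gamma_add_nat_eq_poch {s : ℝ} (hs : ∀ k : ℕ, s + k ≠ 0) (j : ℕ) :
    Real.Gamma (s + j) = poch s j * Real.Gamma s := by
  induction j with
  | zero => simp [poch]
  | succ j ih =>
    rw [Nat.cast_succ, ← add_assoc, Real.Gamma_add_one (hs j), ih]
    simp only [poch, prod_range_succ]
    ring

lemma integral_eval_mul_rpow_mul_exp_neg (p : ℝ[X]) {β : ℝ} (hβ : -1 < β) {N : ℕ}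
    (hN : p.natDegree < N) :
    ∫ x in Set.Ioi (0 : ℝ), p.eval x * x ^ β * Real.exp (-x) =
      ∑ j ∈ range N, p.coeff j * Real.Gamma (β + j + 1) := by
  have hs (j : ℕ) : 0 < β + j + 1 := by linarith [j.cast_nonneg (α := ℝ)]
  have hexpand : ∀ x ∈ Set.Ioi (0 : ℝ), p.eval x * x ^ β * Real.exp (-x) =
      ∑ j ∈ range N, p.coeff j * (Real.exp (-x) * x ^ (β + j + 1 - 1)) := by
    intro x hx
    rw [eval_eq_sum_range' hN, sum_mul, sum_mul]
    refine sum_congr rfl fun j _ => ?_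
    rw [add_sub_cancel_right, Real.rpow_add hx, Real.rpow_natCast]
    ring
  rw [MeasureTheory.setIntegral_congr_fun measurableSet_Ioi hexpand,
    MeasureTheory.integral_finsetSum _ fun j _ =>
      (Real.GammaIntegral_convergent (hs j)).const_mul _]
  refine sum_congr rfl fun j _ => ?_
  rw [MeasureTheory.integral_const_mul, Real.Gamma_eq_integral (hs j)]

lemma natDegree_laguerre_le (α : ℝ) (n : ℕ) : (laguerre α n).natDegree ≤ n :=
  natDegree_sum_le_of_forall_le _ _ fun j hj =>
    (natDegree_C_mul_X_pow_le _ j).trans (Nat.lt_succ_iff.mp (mem_range.mp hj))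

lemma coeff_laguerre (α : ℝ) {n j : ℕ} (hj : j ≤ n) :
    (laguerre α n).coeff j = (-1) ^ j / j ! * genBinom α n j := by
  simp only [laguerre, finsetSum_coeff, coeff_C_mul_X_pow, sum_ite_eq, mem_range,
    if_pos (Nat.lt_succ_of_le hj)]

/-- `∫_0^∞ L_n^α(x)·x^{α−l}·e^{−x} dx = Γ(α−l+1)·binom(n+l−1, l−1)` for `α − l > −1`. -/
theorem statement17 (α : ℝ) (l : ℕ) (hl : 1 ≤ l) (hαl : α - l > -1) (n : ℕ) :
    ∫ x in Set.Ioi (0 : ℝ),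
        (laguerre α n).eval x * x ^ (α - (l : ℝ)) * Real.exp (-x) =
      Real.Gamma (α - l + 1) * (Nat.choose (n + l - 1) (l - 1) : ℝ) := by
  have hβ (k : ℕ) : α - l + 1 + k ≠ 0 := by linarith [k.cast_nonneg (α := ℝ)]
  have hchoose : α - (α - l + 1) + n = ((n + l - 1 : ℕ) : ℝ) := by
    rw [Nat.cast_sub (by omega)]; push_cast; ring
  rw [integral_eval_mul_rpow_mul_exp_neg _ hαl (Nat.lt_succ_of_le (natDegree_laguerre_le α n)),
    ← Nat.choose_symm_of_eq_add (by omega : n + l - 1 = n + (l - 1)), ← Ring.choose_natCast,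
    ← hchoose, ← sum_genBinom_mul_poch, mul_sum]
  refine sum_congr rfl fun j hj => ?_
  rw [coeff_laguerre α (Nat.lt_succ_iff.mp (mem_range.mp hj)), add_right_comm,
    Real.Gamma_add_nat_eq_poch hβ]
  ring
end

section
/- Let α and m be positive integers with 1 ≤ α ≤ m−1, let G = {α, α+1, …, α+m−1} (so g_h = α+h−1 for h = 1,…,m), and for h = 1,…,m let R_{g_h}(x) = binom(x+α+h−1, α+h−1) + (h−1)!·Σ_{l=0}^{h+α−m−1} ((−1)^l·ã_{h−l−1}/(α−l)_l)·binom(x+l, l), where ã_0, …, ã_{m−1} are real numbers and empty sums equal 0 (here binom(x+l, l) = (x+1)(x+2)⋯(x+l)/l! and (a)_l = a(a+1)⋯(a+l−1)). Assume Ω_G(n) ≠ 0 for every integer n ≥ 0. Then q_n^{(j)}(0) = 0 for every j = 0,…,m−α−1 and every n ≥ m−α. -/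
open Polynomial Finset

/-! Expanding `q_n` along its first row shows that `q_n^{(j)}(0)` is the determinant obtained by
replacing the Laguerre row with `(L_{n-c}^α)^{(j)}(0) = (-1)^j binom(n-c+α, α+j)`. By the
Gregory–Newton formula for the backward difference, `x ↦ binom(x-j+α+j, α+j)` is a combination
of the `x ↦ binom(x+α+k, α+k)` with `k ≤ j`, and for `k < m-α` these are exactly the `R_{g_{k+1}}`,
whose correction sums are empty. So the new first row is a combination of the other rows.
The formula for `(L_u^α)^{(j)}(0)` also holds for `-α ≤ u < 0`, where `L_u^α = 0`, because
`u - j` is then a root of `binom(x+α+j, α+j)`; this is why `n ≥ m-α` is needed. -/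

open Nat

theorem binomPoly_eval (l : ℕ) (x : ℝ) :
    (binomPoly l).eval x = (l ! : ℝ)⁻¹ * ∏ t ∈ range l, (x + t + 1) := by
  simp [binomPoly, eval_prod, add_assoc]

theorem binomPoly_eval_natCast_s18 (d s : ℕ) : (binomPoly d).eval (s : ℝ) = (s + d).choose d := by
  have h : ∏ t ∈ range d, ((s : ℝ) + t + 1) = d ! * (s + d).choose d := by
    rw [← Nat.cast_mul, ← Nat.ascFactorial_eq_factorial_mul_choose, Nat.ascFactorial_eq_prod_range]
    push_cast
    exact prod_congr rfl fun t _ => by ring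
  rw [binomPoly_eval, h, ← mul_assoc, inv_mul_cancel₀ (by positivity), one_mul]

theorem binomPoly_eval_intCast_eq_zero {l : ℕ} {u : ℤ} (h₁ : -(l : ℤ) ≤ u) (h₂ : u < 0) :
    (binomPoly l).eval (u : ℝ) = 0 := by
  have hu : (((-u - 1).toNat : ℤ) : ℝ) = -u - 1 := by
    rw [Int.toNat_of_nonneg (by omega)]; push_cast; ring
  push_cast at hu
  rw [binomPoly_eval, prod_eq_zero (i := (-u - 1).toNat) (by simp; omega) (by rw [hu]; ring),
    mul_zero]

theorem binomPoly_succ_eval_sub_one (d : ℕ) (x : ℝ) :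
    (binomPoly (d + 1)).eval (x - 1) = (binomPoly (d + 1)).eval x - (binomPoly d).eval x := by
  have hshift (t : ℕ) : x - 1 + ((t + 1 : ℕ) : ℝ) + 1 = x + t + 1 := by push_cast; ring
  rw [binomPoly_eval, binomPoly_eval, binomPoly_eval, prod_range_succ', prod_range_succ,
    Nat.factorial_succ]
  simp only [hshift]
  push_cast
  field_simp
  ring

theorem fwdDiff_iter_binomPoly_eval (e k : ℕ) :
    (fwdDiff (-1 : ℝ))^[k] (fun x => (binomPoly (e + k)).eval x) =
      (-1 : ℝ) ^ k • fun x => (binomPoly e).eval x := by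
  induction k generalizing e with
  | zero => simp
  | succ k ih =>
    have hΔ : fwdDiff (-1 : ℝ) (fun x => (binomPoly (e + (k + 1))).eval x) =
        (-1 : ℝ) • fun x => (binomPoly (e + k)).eval x := by
      ext x
      simp [fwdDiff, ← sub_eq_add_neg, ← add_assoc, binomPoly_succ_eval_sub_one]
    rw [Function.iterate_succ_apply, hΔ, fwdDiff_iter_const_smul, ih, smul_smul,
      pow_succ' (-1 : ℝ) k]

theorem binomPoly_eval_sub_natCast (d j : ℕ) (x : ℝ) :
    (binomPoly (d + j)).eval (x - j) =
      ∑ k ∈ range (j + 1), j.choose k * (-1) ^ k * (binomPoly (d + (j - k))).eval x := by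
  have h := shift_eq_sum_fwdDiff_iter (-1 : ℝ) (fun x => (binomPoly (d + j)).eval x) j x
  rw [nsmul_eq_mul, mul_neg_one, ← sub_eq_add_neg] at h
  rw [h]
  refine sum_congr rfl fun k hk => ?_
  have hjk : d + j = d + (j - k) + k := by have := mem_range.mp hk; omega
  rw [hjk, fwdDiff_iter_binomPoly_eval, nsmul_eq_mul, Pi.smul_apply, smul_eq_mul, ← mul_assoc]

theorem laguerre_coeff_s18 (α : ℝ) (n j : ℕ) :
    (laguerre α n).coeff j = if j ≤ n then (-1) ^ j / (j ! : ℝ) * genBinom α n j else 0 := by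
  simp only [laguerre, finsetSum_coeff, coeff_C_mul, coeff_X_pow, mul_ite, mul_one, mul_zero,
    sum_ite_eq, mem_range, Nat.lt_succ_iff]

theorem genBinom_natCast_eq_choose (α : ℕ) {n j : ℕ} (h : j ≤ n) :
    genBinom (α : ℝ) n j = (α + n).choose (n - j) := by
  have hprod : ∏ t ∈ Ico (j + 1) (n + 1), ((α : ℝ) + t) = (n - j) ! * (α + n).choose (n - j) := by
    rw [prod_Ico_eq_prod_range, ← Nat.cast_mul, show α + n = α + j + (n - j) by omega,
      ← Nat.ascFactorial_eq_factorial_mul_choose, Nat.ascFactorial_eq_prod_range,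
      show n + 1 - (j + 1) = n - j by omega]
    push_cast
    exact prod_congr rfl fun t _ => by ring
  rw [genBinom, hprod, mul_div_cancel_left₀ _ (by positivity)]

theorem iterate_derivative_eval_zero {R : Type*} [Semiring R] (p : R[X]) (j : ℕ) :
    (derivative^[j] p).eval 0 = j ! * p.coeff j := by
  rw [← coeff_zero_eq_eval_zero, coeff_iterate_derivative, zero_add, Nat.descFactorial_self,
    nsmul_eq_mul]

theorem iterate_derivative_laguerreZ_eval_zero (α j : ℕ) {u : ℤ} (hu : -(α : ℤ) ≤ u) :
    (derivative^[j] (laguerreZ α u)).eval 0 =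
      (-1) ^ j * (binomPoly (α + j)).eval ((u : ℝ) - j) := by
  rcases lt_or_ge u j with hlt | hle
  · have hcast : (u : ℝ) - j = ((u - j : ℤ) : ℝ) := by push_cast; ring
    rw [hcast, binomPoly_eval_intCast_eq_zero (by omega) (by omega), mul_zero]
    rcases lt_or_ge u 0 with hneg | hnonneg
    · simp [laguerreZ, hneg]
    · lift u to ℕ using hnonneg
      rw [laguerreZ, if_neg (by omega), iterate_derivative_eval_zero, laguerre_coeff_s18,
        if_neg (by omega), mul_zero]
  · lift u to ℕ using by omega
    have hju : j ≤ u := by omega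
    rw [laguerreZ, if_neg (by omega), Int.toNat_natCast, iterate_derivative_eval_zero,
      laguerre_coeff_s18, if_pos hju, genBinom_natCast_eq_choose α hju, Int.cast_natCast,
      ← Nat.cast_sub hju, binomPoly_eval_natCast_s18, show u - j + (α + j) = α + u by omega,
      Nat.choose_symm_of_eq_add (show α + u = u - j + (α + j) by omega)]
    field_simp

namespace Matrix

variable {R : Type*} [CommRing R] {m : ℕ}

theorem det_of_vecCons (v : Fin (m + 1) → R) (B : Matrix (Fin m) (Fin (m + 1)) R) :
    (of (vecCons v B)).det =
      ∑ c : Fin (m + 1), (-1) ^ (c : ℕ) * v c * (B.submatrix id c.succAbove).det :=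
  det_succ_row_zero _

theorem det_of_vecCons_eq_zero_of_mem_span {v : Fin (m + 1) → R}
    {B : Matrix (Fin m) (Fin (m + 1)) R} (hv : v ∈ Submodule.span R (Set.range B)) :
    (of (vecCons v B)).det = 0 := by
  obtain ⟨a, ha⟩ := (Submodule.mem_span_range_iff_exists_fun R).mp hv
  have hv' (c : Fin (m + 1)) : v c = ∑ i, a i * B i c := by simp [← ha, Finset.sum_apply]
  have hrow (i : Fin m) : (of (vecCons (B i) B)).det = 0 :=
    det_zero_of_row_eq (i := 0) (j := i.succ) (Fin.succ_ne_zero i).symm rfl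
  simp only [det_of_vecCons, hv', mul_sum, sum_mul] at hrow ⊢
  rw [sum_comm]
  refine sum_eq_zero fun i _ => ?_
  rw [← mul_zero (a i), ← hrow i, mul_sum]
  exact sum_congr rfl fun c _ => by ring

theorem linearMap_det_of_vecCons_map_algebraMap {A : Type*} [CommRing A] [Algebra R A]
    (f : A →ₗ[R] R) (v : Fin (m + 1) → A) (B : Matrix (Fin m) (Fin (m + 1)) R) :
    f (of (vecCons v (B.map (algebraMap R A)))).det = (of (vecCons (f ∘ v) B)).det := by
  simp only [det_of_vecCons, map_sum]
  refine sum_congr rfl fun c _ => ?_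
  rw [submatrix_map, ← RingHom.mapMatrix_apply, ← RingHom.map_det,
    show (-1) ^ (c : ℕ) * v c * algebraMap R A (B.submatrix id c.succAbove).det =
      ((-1) ^ (c : ℕ) * (B.submatrix id c.succAbove).det) • v c by
        rw [Algebra.smul_def]; simp; ring,
    map_smul, smul_eq_mul, Function.comp_apply]
  ring

end Matrix

theorem qpoly_eq_det_of_vecCons (α : ℝ) {m : ℕ} (R : Fin m → ℝ[X]) (n : ℤ) :
    qpoly α R n = (Matrix.of (Matrix.vecCons (fun c : Fin (m + 1) => laguerreZ α (n - (c : ℕ)))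
      ((Matrix.of fun i (c : Fin (m + 1)) => (R i).eval ((n : ℝ) - (c : ℕ))).map
        (algebraMap ℝ ℝ[X])))).det := by
  rw [qpoly]
  congr 1
  refine Matrix.ext fun i c => ?_
  exact Fin.cases rfl (fun i => rfl) i

theorem statement18_general (α m : ℕ) (hαm : α + 1 ≤ m)
    (ta : ℕ → ℝ) (R : Fin m → Polynomial ℝ)
    (hR : ∀ i : Fin m,
      R i = binomPoly (α + (i : ℕ)) +
        Polynomial.C ((Nat.factorial (i : ℕ) : ℝ)) *
          ∑ l ∈ Finset.range ((i : ℕ) + 1 + α - m),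
            Polynomial.C ((-1 : ℝ) ^ l * ta ((i : ℕ) - l) / poch ((α : ℝ) - l) l) * binomPoly l) :
    ∀ j : ℕ, j + α + 1 ≤ m → ∀ n : ℕ, m - α ≤ n →
      Polynomial.eval 0 (Polynomial.derivative^[j] (qpoly (α : ℝ) R (n : ℤ))) = 0 := by
  intro j hj n hn
  have hR_low (i : Fin m) (hi : i + α < m) : R i = binomPoly (α + i) := by
    rw [hR i, Nat.sub_eq_zero_of_le (by omega), range_zero, sum_empty, mul_zero, add_zero]
  let f : ℝ[X] →ₗ[ℝ] ℝ := (leval 0).comp (derivative ^ j)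
  have hf (p : ℝ[X]) : f p = (derivative^[j] p).eval 0 := by
    simp [f, Module.End.pow_apply]
  let B : Matrix (Fin m) (Fin (m + 1)) ℝ := .of fun i c => (R i).eval (((n : ℤ) : ℝ) - (c : ℕ))
  have hrow : (fun c : Fin (m + 1) => f (laguerreZ α (n - (c : ℕ)))) =
      ∑ k ∈ range (j + 1), ((-1) ^ j * j.choose k * (-1) ^ k : ℝ) • B ⟨j - k, by omega⟩ := by
    ext c
    have hc := c.is_le
    rw [hf, iterate_derivative_laguerreZ_eval_zero α j (by omega), binomPoly_eval_sub_natCast,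
      mul_sum, Finset.sum_apply]
    refine sum_congr rfl fun k _ => ?_
    simp only [B, Pi.smul_apply, smul_eq_mul, Matrix.of_apply, Int.cast_sub, Int.cast_natCast,
      hR_low ⟨j - k, by omega⟩ (by simp only; omega)]
    ring
  calc (derivative^[j] (qpoly α R n)).eval 0 = f (qpoly α R n) := (hf _).symm
    _ = (Matrix.of (Matrix.vecCons (fun c : Fin (m + 1) => f (laguerreZ α (n - (c : ℕ)))) B)).det :=
        by
      rw [qpoly_eq_det_of_vecCons]
      exact Matrix.linearMap_det_of_vecCons_map_algebraMap f _ B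
    _ = 0 := by
      refine Matrix.det_of_vecCons_eq_zero_of_mem_span ?_
      rw [hrow]
      exact Submodule.sum_mem _ fun k _ => Submodule.smul_mem _ _ (Submodule.subset_span ⟨_, rfl⟩)

/-- for `1 ≤ α ≤ m−1`, `G = {α, α+1, …, α+m−1}` and `R_{g_h}` given by
formula (rpm1), one has `q_n^{(j)}(0) = 0` for `j = 0,…,m−α−1` and `n ≥ m−α`. -/
theorem statement18 (α m : ℕ) (hα : 1 ≤ α) (hαm : α + 1 ≤ m)
    (ta : ℕ → ℝ) (R : Fin m → Polynomial ℝ)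
    (hR : ∀ i : Fin m,
      R i = binomPoly (α + (i : ℕ)) +
        Polynomial.C ((Nat.factorial (i : ℕ) : ℝ)) *
          ∑ l ∈ Finset.range ((i : ℕ) + 1 + α - m),
            Polynomial.C ((-1 : ℝ) ^ l * ta ((i : ℕ) - l) / poch ((α : ℝ) - l) l) * binomPoly l)
    (hΩ : ∀ n : ℕ, casoratian R (n : ℝ) ≠ 0) :
    ∀ j : ℕ, j + α + 1 ≤ m → ∀ n : ℕ, m - α ≤ n →
      Polynomial.eval 0 (Polynomial.derivative^[j] (qpoly (α : ℝ) R (n : ℤ))) = 0 :=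
  statement18_general α m hαm ta R hR
end
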